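/- arXiv:2112.06154 — 3 statements merged into one kernel-verified Lean document; each statement's English description precedes it below -/
import Mathlib

section
/- Let G = (V, E) be an undirected graph, let r : V → ℕ be a rank function, and let M > 0 be a real number. For each vertex v and integer i ≥ 0, define k(v, i) to be the smallest nonnegative integer k such that |{u ∈ N(v; i) : r(u) ≥ k}| ≤ M, and define B(v, i) = {u ∈ N(v; i) : r(u) ≥ k(v, i)}. Then for every vertex v and integer i ≥ 1: (a) k(v, i) ≥ k(w, i − 1) for every neighbor w of v; and (b) B(v, i) = {u ∈ T : r(u) ≥ k(v, i)}, where T = {v} ∪ ⋃_{w adjacent to v} B(w, i − 1). -/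
/-- The `i`-neighborhood of `v`: vertices reachable from `v` by a walk
using at most `i` edges. -/
def hNbhd {V : Type*} (G : SimpleGraph V) (v : V) (i : ℕ) : Set V :=
  {u | ∃ p : G.Walk v u, p.length ≤ i}

/-- `kLvl G r M v i` is the smallest nonnegative integer `k` such that the
number of vertices `u` in the `i`-neighborhood of `v` with rank `r u ≥ k`
is at most `M`. -/
noncomputable def kLvl {V : Type*} (G : SimpleGraph V) (r : V → ℕ) (M : ℝ)
    (v : V) (i : ℕ) : ℕ :=
  sInf {k : ℕ | (({u ∈ hNbhd G v i | k ≤ r u}).ncard : ℝ) ≤ M}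

/-- `Bset G r M v i = {u ∈ N(v; i) : r u ≥ k(v, i)}`. -/
noncomputable def Bset {V : Type*} (G : SimpleGraph V) (r : V → ℕ) (M : ℝ)
    (v : V) (i : ℕ) : Set V :=
  {u ∈ hNbhd G v i | kLvl G r M v i ≤ r u}

lemma kSet_nonempty {V : Type*} [Fintype V] (G : SimpleGraph V) (r : V → ℕ)
    (M : ℝ) (hM : 0 < M) (v : V) (i : ℕ) :
    {k : ℕ | (({u ∈ hNbhd G v i | k ≤ r u}).ncard : ℝ) ≤ M}.Nonempty := by
  refine ⟨(Finset.univ.sup r) + 1, ?_⟩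
  have : {u ∈ hNbhd G v i | (Finset.univ.sup r) + 1 ≤ r u} = ∅ := by
    ext u
    simp only [Set.mem_setOf_eq, Set.mem_empty_iff_false, iff_false, not_and]
    intro _
    have : r u ≤ Finset.univ.sup r := Finset.le_sup (Finset.mem_univ u)
    omega
  simp only [Set.mem_setOf_eq, this]
  simpa using hM.le

lemma kLvl_spec {V : Type*} [Fintype V] (G : SimpleGraph V) (r : V → ℕ)
    (M : ℝ) (hM : 0 < M) (v : V) (i : ℕ) :
    (({u ∈ hNbhd G v i | kLvl G r M v i ≤ r u}).ncard : ℝ) ≤ M :=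
  Nat.sInf_mem (kSet_nonempty G r M hM v i)

theorem kLvl_mono_and_Bset_eq {V : Type*} [Fintype V]
    (G : SimpleGraph V) (r : V → ℕ) (M : ℝ) (hM : 0 < M)
    (v : V) (i : ℕ) (hi : 1 ≤ i) :
    (∀ w : V, G.Adj v w → kLvl G r M w (i - 1) ≤ kLvl G r M v i) ∧
    Bset G r M v i =
      {u ∈ ({v} ∪ ⋃ w ∈ {w : V | G.Adj v w}, Bset G r M w (i - 1)) |
        kLvl G r M v i ≤ r u} := by
  have hsub : ∀ w : V, G.Adj v w → hNbhd G w (i - 1) ⊆ hNbhd G v i := by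
    rintro w hvw u ⟨p, hp⟩
    exact ⟨SimpleGraph.Walk.cons hvw p, by simp; omega⟩
  have hmono : ∀ w : V, G.Adj v w → kLvl G r M w (i - 1) ≤ kLvl G r M v i := by
    intro w hvw
    apply Nat.sInf_le
    have hsubset : {u ∈ hNbhd G w (i - 1) | kLvl G r M v i ≤ r u} ⊆
        {u ∈ hNbhd G v i | kLvl G r M v i ≤ r u} := by
      rintro u ⟨hu, hk⟩
      exact ⟨hsub w hvw hu, hk⟩
    have hcard := Set.ncard_le_ncard hsubset (Set.toFinite _)
    calc (({u ∈ hNbhd G w (i - 1) | kLvl G r M v i ≤ r u}).ncard : ℝ)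
        ≤ (({u ∈ hNbhd G v i | kLvl G r M v i ≤ r u}).ncard : ℝ) := by
          exact_mod_cast hcard
      _ ≤ M := kLvl_spec G r M hM v i
  refine ⟨hmono, ?_⟩
  ext u
  simp only [Bset, Set.mem_setOf_eq, Set.mem_union, Set.mem_singleton_iff,
    Set.mem_iUnion]
  constructor
  · rintro ⟨⟨p, hp⟩, hk⟩
    refine ⟨?_, hk⟩
    cases p with
    | nil => exact Or.inl rfl
    | @cons _ w _ hvw q =>
      refine Or.inr ⟨w, hvw, ⟨q, ?_⟩, le_trans (hmono w hvw) hk⟩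
      simp at hp; omega
  · rintro ⟨h, hk⟩
    refine ⟨?_, hk⟩
    rcases h with rfl | ⟨w, hvw, ⟨p, hp⟩, _⟩
    · exact ⟨SimpleGraph.Walk.nil, by simp⟩
    · exact ⟨SimpleGraph.Walk.cons hvw p, by simp; omega⟩
end

section
/- Assume M > 0 is a real number. Let x_1, …, x_d be a finite sequence of natural numbers and let d' ≤ d. Then est(x_1, …, x_{d'}; M) ≤ est(x_1, …, x_d; M). -/
/-- `Scount X i` is the number of entries of `X` that are at least `i`. -/
def Scount (X : List ℕ) (i : ℤ) : ℕ :=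
  X.countP fun x => decide (i ≤ (x : ℤ))

/-- `Tcount X i` is the number of entries of `X`, excluding the first one,
that are at least `i`. -/
def Tcount (X : List ℕ) (i : ℤ) : ℕ :=
  (X.drop 1).countP fun x => decide (i ≤ (x : ℤ))

/-- The smallest nonnegative integer `k` such that `S_k ≤ M`. -/
noncomputable def estK (X : List ℕ) (M : ℝ) : ℕ :=
  sInf {k : ℕ | (Scount X (k : ℤ) : ℝ) ≤ M}

/-- `est X M = max (T_k · 2^k) (M · 2^(k-1))` if `k > 0`, and `T_0` if `k = 0`,
where `k` is the smallest nonnegative integer with `S_k ≤ M`. -/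
noncomputable def est (X : List ℕ) (M : ℝ) : ℝ :=
  if 0 < estK X M then
    max ((Tcount X (estK X M : ℤ) : ℝ) * 2 ^ estK X M) (M * 2 ^ (estK X M - 1))
  else (Tcount X 0 : ℝ)

/-! Shortening `X` can only decrease every count `S_i` and `T_i`, hence can only decrease
the threshold `k`. If the threshold stays the same, `est` is monotone in `T_k`. If it drops
from `k` to `k' < k`, then `T_{k'} ≤ S_{k'} ≤ M` gives `est ≤ M · 2^{k'} ≤ M · 2^{k-1}`,
which is one of the two terms of the maximum defining the larger estimate. -/

-- In `Scount` the list `X` is coerced to `List ℤ` through the list monad.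
lemma scount_eq_countP (X : List ℕ) (i : ℤ) :
    Scount X i = X.countP fun n : ℕ => decide (i ≤ (n : ℤ)) := by
  rw [Scount, List.bind_eq_flatMap]
  exact (congrArg _ (List.flatMap_pure_eq_map _ X)).trans (List.countP_map ..)

lemma tcount_eq_scount_drop (X : List ℕ) (i : ℤ) : Tcount X i = Scount (X.drop 1) i := rfl

lemma scount_le_of_sublist {X Y : List ℕ} (h : Y.Sublist X) (i : ℤ) :
    Scount Y i ≤ Scount X i := by
  simpa only [scount_eq_countP] using h.countP_le

lemma tcount_take_le (X : List ℕ) (n : ℕ) (i : ℤ) : Tcount (X.take n) i ≤ Tcount X i := by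
  rw [tcount_eq_scount_drop, tcount_eq_scount_drop, List.drop_take]
  exact scount_le_of_sublist (List.take_sublist _ _) i

lemma tcount_le_scount (X : List ℕ) (i : ℤ) : Tcount X i ≤ Scount X i :=
  scount_le_of_sublist (List.drop_sublist 1 X) i

lemma scount_eq_zero_of_sum_lt {X : List ℕ} {k : ℕ} (h : X.sum < k) : Scount X (k : ℤ) = 0 := by
  refine (scount_eq_countP X k).trans <| List.countP_eq_zero.mpr fun x hx => ?_
  have : x ≤ X.sum := List.le_sum_of_mem hx
  simp only [decide_eq_true_eq, not_le]
  omega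

section Threshold

variable {M : ℝ} (hM : 0 ≤ M)
include hM

lemma scount_estK_le (X : List ℕ) : (Scount X (estK X M) : ℝ) ≤ M :=
  Nat.sInf_mem (s := {k : ℕ | (Scount X k : ℝ) ≤ M})
    ⟨X.sum + 1, by
      rw [Set.mem_ofPred_eq, scount_eq_zero_of_sum_lt X.sum.lt_succ_self, Nat.cast_zero]
      exact hM⟩

lemma estK_le_of_scount_le {X Y : List ℕ} (hS : ∀ i, Scount Y i ≤ Scount X i) :
    estK Y M ≤ estK X M :=
  Nat.sInf_le <| (Nat.cast_le.mpr (hS _)).trans (scount_estK_le hM X)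

lemma est_le_mul_two_pow_estK (X : List ℕ) : est X M ≤ M * 2 ^ estK X M := by
  have hT : (Tcount X (estK X M) : ℝ) ≤ M :=
    (Nat.cast_le.mpr (tcount_le_scount X _)).trans (scount_estK_le hM X)
  unfold est
  split_ifs with hk
  · exact max_le (by gcongr) (by gcongr; norm_num; omega)
  · simpa [Nat.eq_zero_of_not_pos hk] using hT

end Threshold

lemma mul_two_pow_pred_estK_le_est {X : List ℕ} {M : ℝ} (hk : 0 < estK X M) :
    M * 2 ^ (estK X M - 1) ≤ est X M := by
  rw [est, if_pos hk]
  exact le_max_right _ _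

lemma est_le_est_of_count_le {X Y : List ℕ} {M : ℝ} (hM : 0 ≤ M)
    (hS : ∀ i, Scount Y i ≤ Scount X i) (hT : ∀ i, Tcount Y i ≤ Tcount X i) :
    est Y M ≤ est X M := by
  rcases (estK_le_of_scount_le hM hS).lt_or_eq with hlt | heq
  · calc est Y M ≤ M * 2 ^ estK Y M := est_le_mul_two_pow_estK hM Y
      _ ≤ M * 2 ^ (estK X M - 1) := by gcongr; norm_num; omega
      _ ≤ est X M := mul_two_pow_pred_estK_le_est (by omega)
  · unfold est
    rw [heq]
    split_ifs
    · exact max_le_max_right _ (by gcongr; exact hT _)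
    · exact_mod_cast hT 0

theorem est_mono_general (M : ℝ) (hM : 0 < M) (X : List ℕ) (d' : ℕ) :
    est (X.take d') M ≤ est X M :=
  est_le_est_of_count_le hM.le (scount_le_of_sublist (List.take_sublist _ _))
    (tcount_take_le X d')

theorem est_mono (M : ℝ) (hM : 0 < M) (X : List ℕ) (d' : ℕ)
    (hd' : d' ≤ X.length) :
    est (X.take d') M ≤ est X M :=
  est_mono_general M hM X d'
end

section
/- Assume 0 < ε ≤ 1/2 and C > 0, and set M = 1 + (4(2 + ε)/ε²)(C + log 8). Let R_1, …, R_d be independent random variables, each distributed according to the geometric distribution Geom(1/2) on the nonnegative integers, and define T_i = |{j ∈ {1,…,d} : R_j ≥ i and j ≥ 2}|. Let ℓ be an integer such that M·2^{ℓ−1} ≤ d < M·2^{ℓ}. Then for every nonnegative integer k with k ≤ ℓ + 1, P(|T_k − 2^{−k}(d − 1)| > ε·2^{−k}(d − 1)) < (1/4)·e^{−C}. -/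
open MeasureTheory ProbabilityTheory

/-- `Scnt R i` is the number of indices `j` with `R j ≥ i` (an integer index
`i ≤ 0` is satisfied by every entry). -/
def Scnt {d : ℕ} (R : Fin d → ℕ) (i : ℤ) : ℕ :=
  (Finset.univ.filter fun j : Fin d => i ≤ (R j : ℤ)).card

/-- `Tcnt R i` is the number of indices `j` other than the first one with
`R j ≥ i`. -/
def Tcnt {d : ℕ} (R : Fin d → ℕ) (i : ℤ) : ℕ :=
  (Finset.univ.filter fun j : Fin d => i ≤ (R j : ℤ) ∧ 0 < (j : ℕ)).card

/-!
Each `T_k` is a sum of `d - 1` independent indicators of events of probability `2^{-k}`, so the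
multiplicative Chernoff bounds `P(S ≥ (1+ε)μ) ≤ exp(-3ε²μ/(6+2ε))` and
`P(S ≤ (1-ε)μ) ≤ exp(-ε²μ/2)` apply to it with mean `μ = 2^{-k}(d-1)`. Since `k ≤ ℓ + 1` and
`d ≥ M 2^{ℓ-1}`, the mean is at least `M/4 - 1`, and the choice of `M` makes both exponents exceed
`C + log 8`, so that each tail is below `e^{-C}/8`.
-/

open Set in
lemma le_of_hasDerivAt_nonneg_Icc {f f' : ℝ → ℝ} {a b : ℝ} (hab : a ≤ b)
    (hf : ∀ x ∈ Icc a b, HasDerivAt f (f' x) x) (hf' : ∀ x ∈ Ioo a b, 0 ≤ f' x) :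
    f a ≤ f b :=
  monotoneOn_of_hasDerivWithinAt_nonneg (convex_Icc a b)
    (fun x hx ↦ (hf x hx).continuousAt.continuousWithinAt)
    (fun x hx ↦ (hf x (interior_subset hx)).hasDerivWithinAt)
    (fun x hx ↦ hf' x (by rwa [interior_Icc] at hx))
    (left_mem_Icc.2 hab) (right_mem_Icc.2 hab) hab

namespace Real

open Set

lemma two_mul_div_two_add_le_log_one_add {x : ℝ} (hx : 0 ≤ x) :
    2 * x / (2 + x) ≤ log (1 + x) := by
  have h := sum_range_le_log_div (x := x / (2 + x)) (by positivity)
    ((div_lt_one (by positivity)).2 (by linarith)) 1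
  have hquot : (1 + x / (2 + x)) / (1 - x / (2 + x)) = 1 + x := by
    field_simp; ring
  rw [hquot] at h
  simp only [Finset.sum_range_one] at h
  linarith [show 2 * x / (2 + x) = 2 * (x / (2 + x)) by ring]

-- The usual rate `e ^ 2 / (2 + e)` would not do: with it the exponent falls short of `C + log 8`.
lemma three_mul_sq_div_le_one_add_mul_log_one_add_sub {e : ℝ} (he : 0 ≤ e) :
    3 * e ^ 2 / (6 + 2 * e) ≤ (1 + e) * log (1 + e) - e := by
  let f : ℝ → ℝ := fun x ↦ (1 + x) * log (1 + x) - x - 3 * x ^ 2 / (6 + 2 * x)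
  have hderiv : ∀ x ∈ Icc 0 e,
      HasDerivAt f (log (1 + x) - 3 * x * (6 + x) / (2 * (3 + x) ^ 2)) x := by
    intro x hx
    have h1 : (0 : ℝ) < 1 + x := by linarith [hx.1]
    have h3 : (3 : ℝ) + x ≠ 0 := by linarith [hx.1]
    have h6 : (6 : ℝ) + 2 * x ≠ 0 := by linarith [hx.1]
    have hlin : HasDerivAt (fun y : ℝ ↦ 1 + y) 1 x := (hasDerivAt_id x).const_add 1
    have := (((hlin.mul (hlin.log h1.ne')).sub (hasDerivAt_id x)).sub
      (((hasDerivAt_pow 2 x).const_mul 3).div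
        (((hasDerivAt_id x).const_mul 2).const_add 6) h6))
    refine this.congr_deriv ?_
    simp only [id, Nat.cast_ofNat]
    rw [show (6 : ℝ) + 2 * x = 2 * (3 + x) by ring]
    field_simp
    ring
  have hnonneg : ∀ x ∈ Ioo 0 e, 0 ≤ log (1 + x) - 3 * x * (6 + x) / (2 * (3 + x) ^ 2) := by
    intro x ⟨hx, _⟩
    have hlog := two_mul_div_two_add_le_log_one_add hx.le
    have : 3 * x * (6 + x) / (2 * (3 + x) ^ 2) ≤ 2 * x / (2 + x) := by
      rw [div_le_div_iff₀ (by positivity) (by positivity)]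
      nlinarith [hx, sq_nonneg x]
    linarith
  have := le_of_hasDerivAt_nonneg_Icc he hderiv hnonneg
  simp only [f] at this
  norm_num at this
  linarith

lemma sq_div_two_le_add_one_sub_mul_log_one_sub {e : ℝ} (he : 0 ≤ e) (he' : e < 1) :
    e ^ 2 / 2 ≤ e + (1 - e) * log (1 - e) := by
  let f : ℝ → ℝ := fun x ↦ x + (1 - x) * log (1 - x) - x ^ 2 / 2
  have hderiv : ∀ x ∈ Icc 0 e, HasDerivAt f (-log (1 - x) - x) x := by
    intro x hx
    have h1 : (0 : ℝ) < 1 - x := by linarith [hx.2]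
    have hlin : HasDerivAt (fun y : ℝ ↦ 1 - y) (-1) x := by
      simpa using (hasDerivAt_id x).const_sub 1
    have := ((hasDerivAt_id x).add (hlin.mul (hlin.log h1.ne'))).sub
      ((hasDerivAt_pow 2 x).div_const 2)
    refine this.congr_deriv ?_
    field_simp
    ring
  have hnonneg : ∀ x ∈ Ioo 0 e, 0 ≤ -log (1 - x) - x := fun x hx ↦ by
    linarith [log_le_sub_one_of_pos (show 0 < 1 - x by linarith [hx.2])]
  have := le_of_hasDerivAt_nonneg_Icc he hderiv hnonneg
  simp only [f] at this
  norm_num at this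
  linarith

end Real

section Chernoff

open Real

variable {Ω ι : Type*}

lemma exp_mul_indicator_one (A : Set Ω) (t : ℝ) (ω : Ω) :
    exp (t * A.indicator 1 ω) = A.indicator (fun _ ↦ exp t - 1) ω + 1 := by
  by_cases h : ω ∈ A <;> simp [h]

variable [MeasurableSpace Ω] {μ : Measure Ω} [IsProbabilityMeasure μ]

lemma integrable_exp_mul_indicator_one {A : Set Ω} (hA : MeasurableSet A) (t : ℝ) :
    Integrable (fun ω ↦ exp (t * A.indicator 1 ω)) μ := by
  simp_rw [exp_mul_indicator_one]
  exact ((integrable_const _).indicator hA).add (integrable_const 1)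

lemma mgf_indicator_one {A : Set Ω} (hA : MeasurableSet A) (t : ℝ) :
    mgf (A.indicator 1) μ t = 1 + μ.real A * (exp t - 1) := by
  simp_rw [mgf, exp_mul_indicator_one]
  rw [integral_add ((integrable_const _).indicator hA) (integrable_const 1),
    integral_indicator_const _ hA]
  simp [add_comm]

variable {A : ι → Set Ω} {p : ℝ}

lemma mgf_sum_indicator_one_le (hA : ∀ j, MeasurableSet (A j))
    (hindep : iIndepFun (fun j ↦ (A j).indicator (1 : Ω → ℝ)) μ) (hp : ∀ j, μ.real (A j) = p)
    (s : Finset ι) (t : ℝ) :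
    mgf (∑ j ∈ s, (A j).indicator 1) μ t ≤ exp (p * s.card * (exp t - 1)) := by
  rw [hindep.mgf_sum fun j ↦ measurable_const.indicator (hA j)]
  calc ∏ j ∈ s, mgf ((A j).indicator 1) μ t ≤ ∏ _j ∈ s, exp (p * (exp t - 1)) := by
        refine Finset.prod_le_prod (fun j _ ↦ mgf_nonneg) fun j _ ↦ ?_
        rw [mgf_indicator_one (hA j), hp j]
        linarith [add_one_le_exp (p * (exp t - 1))]
    _ = exp (p * s.card * (exp t - 1)) := by
        rw [Finset.prod_const, ← exp_nat_mul]
        ring_nf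

variable (hA : ∀ j, MeasurableSet (A j))
    (hindep : iIndepFun (fun j ↦ (A j).indicator (1 : Ω → ℝ)) μ) (s : Finset ι)
include hA hindep

lemma integrable_exp_mul_sum_indicator_one (t : ℝ) :
    Integrable (fun ω ↦ exp (t * (∑ j ∈ s, (A j).indicator 1) ω)) μ :=
  hindep.integrable_exp_mul_sum (fun j ↦ measurable_const.indicator (hA j))
    fun j _ ↦ integrable_exp_mul_indicator_one (hA j) t

variable (hp : ∀ j, μ.real (A j) = p)
include hp

lemma measureReal_sum_indicator_one_ge_le {e : ℝ} (he : 0 ≤ e) :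
    μ.real {ω | (1 + e) * (p * s.card) ≤ (∑ j ∈ s, (A j).indicator 1) ω} ≤
      exp (-(p * s.card) * ((1 + e) * log (1 + e) - e)) := by
  have he1 : 0 < 1 + e := by linarith
  calc _ ≤ exp (-log (1 + e) * ((1 + e) * (p * s.card))) *
          exp (p * s.card * (exp (log (1 + e)) - 1)) :=
        (measure_ge_le_exp_mul_mgf _ (log_nonneg (by linarith))
          (integrable_exp_mul_sum_indicator_one hA hindep s _)).trans
          (mul_le_mul_of_nonneg_left (mgf_sum_indicator_one_le hA hindep hp s _) (exp_pos _).le)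
    _ = _ := by rw [exp_log he1, ← exp_add]; ring_nf

lemma measureReal_sum_indicator_one_le_le {e : ℝ} (he : 0 ≤ e) (he' : e < 1) :
    μ.real {ω | (∑ j ∈ s, (A j).indicator 1) ω ≤ (1 - e) * (p * s.card)} ≤
      exp (-(p * s.card) * (e + (1 - e) * log (1 - e))) := by
  have he1 : 0 < 1 - e := by linarith
  calc _ ≤ exp (-log (1 - e) * ((1 - e) * (p * s.card))) *
          exp (p * s.card * (exp (log (1 - e)) - 1)) :=
        (measure_le_le_exp_mul_mgf _ (log_nonpos he1.le (by linarith))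
          (integrable_exp_mul_sum_indicator_one hA hindep s _)).trans
          (mul_le_mul_of_nonneg_left (mgf_sum_indicator_one_le hA hindep hp s _) (exp_pos _).le)
    _ = _ := by rw [exp_log he1, ← exp_add]; ring_nf

lemma measureReal_abs_sum_indicator_one_sub_gt_le {e : ℝ} (he : 0 ≤ e) (he' : e < 1) :
    μ.real {ω | e * (p * s.card) < |(∑ j ∈ s, (A j).indicator 1) ω - p * s.card|} ≤
      exp (-(3 * e ^ 2 / (6 + 2 * e)) * (p * s.card)) + exp (-(e ^ 2 / 2) * (p * s.card)) := by
  have hmean : 0 ≤ p * s.card := by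
    rcases s.eq_empty_or_nonempty with rfl | ⟨j, -⟩
    · simp
    · rw [← hp j]; positivity
  have hsplit : {ω | e * (p * s.card) < |(∑ j ∈ s, (A j).indicator 1) ω - p * s.card|} ⊆
      {ω | (1 + e) * (p * s.card) ≤ (∑ j ∈ s, (A j).indicator 1) ω} ∪
        {ω | (∑ j ∈ s, (A j).indicator 1) ω ≤ (1 - e) * (p * s.card)} := by
    intro ω hω
    rcases lt_abs.1 hω.out with h | h
    · exact Or.inl (by simp only [Set.mem_ofPred_eq]; linarith)
    · exact Or.inr (by simp only [Set.mem_ofPred_eq]; linarith)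
  refine (measureReal_mono hsplit).trans ((measureReal_union_le _ _).trans (add_le_add ?_ ?_))
  · refine (measureReal_sum_indicator_one_ge_le hA hindep s hp he).trans (exp_le_exp.2 ?_)
    nlinarith [Real.three_mul_sq_div_le_one_add_mul_log_one_add_sub he]
  · refine (measureReal_sum_indicator_one_le_le hA hindep s hp he he').trans (exp_le_exp.2 ?_)
    nlinarith [Real.sq_div_two_le_add_one_sub_mul_log_one_sub he he']

end Chernoff

lemma measure_le_of_geometric_half {Ω : Type*} [MeasurableSpace Ω] {μ : Measure Ω}
    {X : Ω → ℕ} (hX : Measurable X) (hgeom : ∀ i : ℕ, μ {ω | X ω = i} = 2⁻¹ ^ (i + 1))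
    (k : ℕ) : μ {ω | k ≤ X ω} = 2⁻¹ ^ k := by
  have hunion : {ω | k ≤ X ω} = ⋃ i : ℕ, {ω | X ω = k + i} := by
    ext ω
    simp only [Set.mem_ofPred_eq, Set.mem_iUnion]
    exact ⟨fun h ↦ ⟨X ω - k, by omega⟩, fun ⟨i, hi⟩ ↦ by omega⟩
  rw [hunion, measure_iUnion (fun i j hij ↦ Set.disjoint_left.2 fun ω hi hj ↦ hij (by
      simp only [Set.mem_ofPred_eq] at hi hj; omega))
    fun i ↦ measurableSet_eq_fun hX measurable_const]
  simp_rw [hgeom, show ∀ i, k + i + 1 = (k + 1) + i by omega, pow_add, ENNReal.tsum_mul_left,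
    ENNReal.tsum_geometric, ENNReal.one_sub_inv_two]
  rw [pow_one, mul_assoc, ENNReal.mul_inv_cancel (by simp) (by simp), mul_one]

lemma card_filter_fin_pos (d : ℕ) :
    (Finset.univ.filter fun j : Fin d => 0 < (j : ℕ)).card = d - 1 := by
  cases d with
  | zero => simp
  | succ n =>
    rw [Finset.filter_congr (q := (· ≠ 0)) (by simp [Fin.pos_iff_ne_zero']),
      Finset.filter_ne', Finset.card_erase_of_mem (Finset.mem_univ _)]
    simp

lemma Tcnt_eq_sum_indicator_one {Ω : Type*} {d : ℕ} (R : Fin d → Ω → ℕ) (k : ℕ) (ω : Ω) :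
    (Tcnt (fun j ↦ R j ω) k : ℝ) =
      (∑ j ∈ Finset.univ.filter (fun j : Fin d ↦ 0 < (j : ℕ)),
        {ω | k ≤ R j ω}.indicator 1) ω := by
  rw [Finset.sum_apply]
  simp only [Set.indicator_apply, Set.mem_ofPred_eq, Pi.one_apply]
  rw [Finset.sum_boole, Finset.filter_filter, Tcnt]
  simp [and_comm]

lemma div_four_sub_one_le_two_zpow_neg_mul_sub_one {M d : ℝ} {ℓ : ℤ} {k : ℕ} (hd : 0 ≤ d)
    (hℓ : M * 2 ^ (ℓ - 1) ≤ d) (hk : (k : ℤ) ≤ ℓ + 1) :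
    M / 4 - 1 ≤ 2 ^ (-(k : ℤ)) * (d - 1) := by
  have hmono : (2 : ℝ) ^ (-(ℓ + 1)) ≤ 2 ^ (-(k : ℤ)) := zpow_le_zpow_right₀ one_le_two (by omega)
  have hle_one : (2 : ℝ) ^ (-(k : ℤ)) ≤ 1 := zpow_le_one_of_nonpos₀ one_le_two (by omega)
  have hquarter : (2 : ℝ) ^ (-(ℓ + 1)) * 2 ^ (ℓ - 1) = 1 / 4 := by
    rw [← zpow_add₀ two_ne_zero, show -(ℓ + 1) + (ℓ - 1) = -2 by ring]
    norm_num
  calc M / 4 - 1 = 2 ^ (-(ℓ + 1)) * (M * 2 ^ (ℓ - 1)) - 1 := by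
        rw [mul_left_comm, hquarter]; ring
    _ ≤ 2 ^ (-(ℓ + 1)) * d - 1 := by gcongr
    _ ≤ 2 ^ (-(k : ℤ)) * d - 2 ^ (-(k : ℤ)) := by nlinarith
    _ = 2 ^ (-(k : ℤ)) * (d - 1) := by ring

lemma lt_chernoff_rates_mul {ε K M m : ℝ} (hε : 0 < ε) (hK : 9 / 4 * ε < K)
    (hM : M = 1 + 4 * (2 + ε) / ε ^ 2 * K) (hm : M / 4 - 1 ≤ m) :
    K < 3 * ε ^ 2 / (6 + 2 * ε) * m ∧ K < ε ^ 2 / 2 * m := by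
  have hmean : (2 + ε) * K - 3 * ε ^ 2 / 4 ≤ ε ^ 2 * m := by
    have := mul_le_mul_of_nonneg_left hm (sq_nonneg ε)
    rw [hM] at this
    field_simp at this
    linarith
  constructor
  · rw [div_mul_eq_mul_div, lt_div_iff₀ (by positivity)]
    nlinarith
  · nlinarith

lemma nine_eighths_lt_log_eight : 9 / 8 < Real.log 8 := by
  rw [show (8 : ℝ) = 2 ^ 3 by norm_num, Real.log_pow]
  linarith [Real.log_two_gt_d9]

theorem Tcount_tail_bound_general {Ω : Type*} [MeasureSpace Ω]
    [IsProbabilityMeasure (ℙ : Measure Ω)]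
    (ε C : ℝ) (hε : 0 < ε) (hε' : ε ≤ 1 / 2) (hC : 0 < C)
    (M : ℝ) (hM : M = 1 + 4 * (2 + ε) / ε ^ 2 * (C + Real.log 8))
    (d : ℕ) (R : Fin d → Ω → ℕ)
    (hmeas : ∀ j, Measurable (R j))
    (hindep : iIndepFun R ℙ)
    (hgeom : ∀ j (i : ℕ), ℙ {ω | R j ω = i} = (2 : ENNReal)⁻¹ ^ (i + 1))
    (ℓ : ℤ) 
    (hℓ₁ : M * 2 ^ (ℓ - 1) ≤ (d : ℝ)) (k : ℕ) (hk : (k : ℤ) ≤ ℓ + 1) :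
    ℙ {ω | ε * (2 ^ (-(k : ℤ)) * ((d : ℝ) - 1)) <
        |(Tcnt (fun j => R j ω) (k : ℤ) : ℝ) - 2 ^ (-(k : ℤ)) * ((d : ℝ) - 1)|} <
      ENNReal.ofReal (1 / 4 * Real.exp (-C)) := by
  set K := C + Real.log 8
  obtain ⟨hupper, hlower⟩ := lt_chernoff_rates_mul hε (by linarith [nine_eighths_lt_log_eight])
    hM (div_four_sub_one_le_two_zpow_neg_mul_sub_one d.cast_nonneg hℓ₁ hk)
  have hmean : 0 < (2 : ℝ) ^ (-(k : ℤ)) * ((d : ℝ) - 1) :=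
    pos_of_mul_pos_right (by linarith [nine_eighths_lt_log_eight]) (by positivity : 0 ≤ ε ^ 2 / 2)
  have hd : 1 ≤ d := by
    exact_mod_cast (sub_pos.1 (pos_of_mul_pos_right hmean (by positivity))).le
  have hcard : ((Finset.univ.filter fun j : Fin d ↦ 0 < (j : ℕ)).card : ℝ) = d - 1 := by
    rw [card_filter_fin_pos, Nat.cast_sub hd, Nat.cast_one]
  have hA : ∀ j, MeasurableSet {ω | k ≤ R j ω} := fun j ↦ hmeas j measurableSet_Ici
  have hp : ∀ j, (ℙ : Measure Ω).real {ω | k ≤ R j ω} = 2 ^ (-(k : ℤ)) := fun j ↦ by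
    rw [measureReal_def, measure_le_of_geometric_half (hmeas j) (hgeom j)]
    simp [zpow_neg]
  have hindicator : iIndepFun (fun j ↦ {ω | k ≤ R j ω}.indicator (1 : Ω → ℝ)) ℙ :=
    hindep.comp (fun _ ↦ {n | k ≤ n}.indicator 1) fun _ ↦ measurable_from_nat
  have hbound := measureReal_abs_sum_indicator_one_sub_gt_le hA hindicator
    (Finset.univ.filter fun j : Fin d ↦ 0 < (j : ℕ)) hp hε.le (by linarith)
  simp only [hcard, ← Tcnt_eq_sum_indicator_one] at hbound
  rw [← ofReal_measureReal, ENNReal.ofReal_lt_ofReal_iff (by positivity)]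
  calc _ ≤ _ := hbound
    _ < Real.exp (-K) + Real.exp (-K) := by gcongr <;> linarith
    _ = 1 / 4 * Real.exp (-C) := by
        rw [Real.exp_neg, Real.exp_add, Real.exp_log (by norm_num), Real.exp_neg]
        ring

theorem Tcount_tail_bound {Ω : Type*} [MeasureSpace Ω]
    [IsProbabilityMeasure (ℙ : Measure Ω)]
    (ε C : ℝ) (hε : 0 < ε) (hε' : ε ≤ 1 / 2) (hC : 0 < C)
    (M : ℝ) (hM : M = 1 + 4 * (2 + ε) / ε ^ 2 * (C + Real.log 8))
    (d : ℕ) (R : Fin d → Ω → ℕ)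
    (hmeas : ∀ j, Measurable (R j))
    (hindep : iIndepFun R ℙ)
    (hgeom : ∀ j (i : ℕ), ℙ {ω | R j ω = i} = (2 : ENNReal)⁻¹ ^ (i + 1))
    (ℓ : ℤ) 
    (hℓ₁ : M * 2 ^ (ℓ - 1) ≤ (d : ℝ)) (hℓ₂ : (d : ℝ) < M * 2 ^ ℓ) (k : ℕ) (hk : (k : ℤ) ≤ ℓ + 1) :
    ℙ {ω | ε * (2 ^ (-(k : ℤ)) * ((d : ℝ) - 1)) <
        |(Tcnt (fun j => R j ω) (k : ℤ) : ℝ) - 2 ^ (-(k : ℤ)) * ((d : ℝ) - 1)|} <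
      ENNReal.ofReal (1 / 4 * Real.exp (-C)) :=
  Tcount_tail_bound_general ε C hε hε' hC M hM d R hmeas hindep hgeom ℓ hℓ₁ k hk
end
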